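/- arXiv:2305.13790 — 6 statements merged into one kernel-verified Lean document; each statement's English description precedes it below -/
import Mathlib

section
/- In symmetric atomic deduction modulo a rewrite relation R, a sequent Γ ⊢ Δ is provable if and only if Γ contains an atomic proposition A and Δ contains an atomic proposition B such that A ≡ B, where ≡ is the reflexive-symmetric-transitive closure of R. -/
open Relation

/--
Symmetric atomic deduction modulo a rewrite relation `R` on atomic propositions `α`.
Sequents are pairs of finite multisets of atomic propositions; `≡` is the
reflexive-symmetric-transitive closure `Relation.EqvGen R` of `R`.
The Boolean index records whether the Cut rule is allowed:
`SymDed R true Γ Δ` is provability in the full system, `SymDed R false Γ Δ`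
is provability by a cut-free proof.
-/
inductive SymDed (R : α → α → Prop) : Bool → Multiset α → Multiset α → Prop
  | ax {b : Bool} (Γ Δ : Multiset α) (A B : α)
      (h : EqvGen R A B) :
      SymDed R b (A ::ₘ Γ) (B ::ₘ Δ)
  | cut (Γ Δ : Multiset α) (C₁ C₂ : α)
      (h : EqvGen R C₁ C₂)
      (p₁ : SymDed R true Γ (C₁ ::ₘ Δ)) (p₂ : SymDed R true (C₂ ::ₘ Γ) Δ) :
      SymDed R true Γ Δ
  | contrL {b : Bool} (Γ Δ : Multiset α) (A A₁ A₂ : α)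
      (h₁ : EqvGen R A A₁) (h₂ : EqvGen R A A₂)
      (p : SymDed R b (A₁ ::ₘ A₂ ::ₘ Γ) Δ) :
      SymDed R b (A ::ₘ Γ) Δ
  | contrR {b : Bool} (Γ Δ : Multiset α) (A A₁ A₂ : α)
      (h₁ : EqvGen R A A₁) (h₂ : EqvGen R A A₂)
      (p : SymDed R b Γ (A₁ ::ₘ A₂ ::ₘ Δ)) :
      SymDed R b Γ (A ::ₘ Δ)
  | weakL {b : Bool} (Γ Δ : Multiset α) (A : α)
      (p : SymDed R b Γ Δ) :
      SymDed R b (A ::ₘ Γ) Δ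
  | weakR {b : Bool} (Γ Δ : Multiset α) (A : α)
      (p : SymDed R b Γ Δ) :
      SymDed R b Γ (A ::ₘ Δ)

/-!
Call a sequent `Γ ⊢ Δ` linked when some `A ∈ Γ` and `B ∈ Δ` satisfy `A ≡ B`. Every linked sequent
is an instance of the axiom rule, and every rule, Cut included, preserves linkedness because `≡` is
an equivalence: in a cut the links `A ≡ C₁` and `C₂ ≡ B` through the cut formulas compose to
`A ≡ B`.
-/

section

variable {α : Type*} {R : α → α → Prop}

def Linked (R : α → α → Prop) (Γ Δ : Multiset α) : Prop :=
  ∃ A ∈ Γ, ∃ B ∈ Δ, EqvGen R A B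

namespace Linked

variable {A B C₁ C₂ A₁ A₂ : α} {Γ Δ : Multiset α}

theorem cons_left_iff :
    Linked R (A ::ₘ Γ) Δ ↔ (∃ B ∈ Δ, EqvGen R A B) ∨ Linked R Γ Δ := by
  simp only [Linked, Multiset.mem_cons, or_and_right, exists_or, exists_eq_left]

theorem cons_right_iff :
    Linked R Γ (B ::ₘ Δ) ↔ (∃ A ∈ Γ, EqvGen R A B) ∨ Linked R Γ Δ := by
  simp only [Linked, Multiset.mem_cons, or_and_right, exists_or, exists_eq_left, and_or_left]

theorem of_contr_left (h₁ : EqvGen R A A₁) (h₂ : EqvGen R A A₂)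
    (h : Linked R (A₁ ::ₘ A₂ ::ₘ Γ) Δ) : Linked R (A ::ₘ Γ) Δ := by
  rw [cons_left_iff] at h ⊢
  rcases h with ⟨B, hB, h₁B⟩ | h
  · exact .inl ⟨B, hB, h₁.trans _ _ _ h₁B⟩
  rw [cons_left_iff] at h
  rcases h with ⟨B, hB, h₂B⟩ | h
  · exact .inl ⟨B, hB, h₂.trans _ _ _ h₂B⟩
  · exact .inr h

theorem of_contr_right (h₁ : EqvGen R A A₁) (h₂ : EqvGen R A A₂)
    (h : Linked R Γ (A₁ ::ₘ A₂ ::ₘ Δ)) : Linked R Γ (A ::ₘ Δ) := by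
  rw [cons_right_iff] at h ⊢
  rcases h with ⟨C, hC, hC₁⟩ | h
  · exact .inl ⟨C, hC, hC₁.trans _ _ _ (h₁.symm _ _)⟩
  rw [cons_right_iff] at h
  rcases h with ⟨C, hC, hC₂⟩ | h
  · exact .inl ⟨C, hC, hC₂.trans _ _ _ (h₂.symm _ _)⟩
  · exact .inr h

theorem of_cut (h : EqvGen R C₁ C₂) (h₁ : Linked R Γ (C₁ ::ₘ Δ))
    (h₂ : Linked R (C₂ ::ₘ Γ) Δ) : Linked R Γ Δ := by
  rw [cons_right_iff] at h₁
  rw [cons_left_iff] at h₂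
  rcases h₁ with ⟨A, hA, hAC₁⟩ | h₁
  · rcases h₂ with ⟨B, hB, hC₂B⟩ | h₂
    · exact ⟨A, hA, B, hB, hAC₁.trans _ _ _ (h.trans _ _ _ hC₂B)⟩
    · exact h₂
  · exact h₁

theorem cons_left (h : Linked R Γ Δ) : Linked R (A ::ₘ Γ) Δ :=
  cons_left_iff.2 (.inr h)

theorem cons_right (h : Linked R Γ Δ) : Linked R Γ (B ::ₘ Δ) :=
  cons_right_iff.2 (.inr h)

end Linked

theorem SymDed.linked {b : Bool} {Γ Δ : Multiset α} (h : SymDed R b Γ Δ) : Linked R Γ Δ := by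
  induction h with
  | ax _ _ A B h => exact ⟨A, Multiset.mem_cons_self _ _, B, Multiset.mem_cons_self _ _, h⟩
  | cut _ _ _ _ h _ _ ih₁ ih₂ => exact ih₁.of_cut h ih₂
  | contrL _ _ _ _ _ h₁ h₂ _ ih => exact ih.of_contr_left h₁ h₂
  | contrR _ _ _ _ _ h₁ h₂ _ ih => exact ih.of_contr_right h₁ h₂
  | weakL _ _ _ _ ih => exact ih.cons_left
  | weakR _ _ _ _ ih => exact ih.cons_right

theorem SymDed.of_linked {b : Bool} {Γ Δ : Multiset α} (h : Linked R Γ Δ) : SymDed R b Γ Δ := by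
  obtain ⟨A, hA, B, hB, hAB⟩ := h
  obtain ⟨Γ', rfl⟩ := Multiset.exists_cons_of_mem hA
  obtain ⟨Δ', rfl⟩ := Multiset.exists_cons_of_mem hB
  exact SymDed.ax Γ' Δ' A B hAB

end

/--
In symmetric atomic deduction modulo `R`, the sequent `Γ ⊢ Δ` is provable if and
only if `Γ` contains a proposition `A` and `Δ` contains a proposition `B` with `A ≡ B`.
-/
theorem symDed_provable_iff {α : Type*} (R : α → α → Prop) (Γ Δ : Multiset α) :
    SymDed R true Γ Δ ↔ ∃ A ∈ Γ, ∃ B ∈ Δ, Relation.EqvGen R A B :=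
  ⟨SymDed.linked, SymDed.of_linked⟩
end

section
/- In asymmetric atomic deduction modulo a rewrite relation R, a sequent Γ ⊢ Δ is provable if and only if Γ contains an atomic proposition A and Δ contains an atomic proposition B such that A ≡ B, where ≡ is the reflexive-symmetric-transitive closure of R. -/
open Relation

/--
Asymmetric atomic deduction modulo a rewrite relation `R` on atomic propositions `α`.
Sequents are pairs of finite multisets of atomic propositions; `→*` is the
reflexive-transitive closure `Relation.ReflTransGen R` of `R`.
The Boolean index records whether the Cut rule is allowed:
`AsymDed R true Γ Δ` is provability in the full system, `AsymDed R false Γ Δ`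
is provability by a cut-free proof.
-/
inductive AsymDed (R : α → α → Prop) : Bool → Multiset α → Multiset α → Prop
  | ax {b : Bool} (Γ Δ : Multiset α) (A₁ A₂ C : α)
      (h₁ : ReflTransGen R A₁ C) (h₂ : ReflTransGen R A₂ C) :
      AsymDed R b (A₁ ::ₘ Γ) (A₂ ::ₘ Δ)
  | cut (Γ Δ : Multiset α) (C C₁ C₂ : α)
      (h₁ : ReflTransGen R C C₁) (h₂ : ReflTransGen R C C₂)
      (p₁ : AsymDed R true Γ (C₁ ::ₘ Δ)) (p₂ : AsymDed R true (C₂ ::ₘ Γ) Δ) :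
      AsymDed R true Γ Δ
  | contrL {b : Bool} (Γ Δ : Multiset α) (A A₁ A₂ : α)
      (h₁ : ReflTransGen R A A₁) (h₂ : ReflTransGen R A A₂)
      (p : AsymDed R b (A₁ ::ₘ A₂ ::ₘ Γ) Δ) :
      AsymDed R b (A ::ₘ Γ) Δ
  | contrR {b : Bool} (Γ Δ : Multiset α) (A A₁ A₂ : α)
      (h₁ : ReflTransGen R A A₁) (h₂ : ReflTransGen R A A₂)
      (p : AsymDed R b Γ (A₁ ::ₘ A₂ ::ₘ Δ)) :
      AsymDed R b Γ (A ::ₘ Δ)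
  | weakL {b : Bool} (Γ Δ : Multiset α) (A : α)
      (p : AsymDed R b Γ Δ) :
      AsymDed R b (A ::ₘ Γ) Δ
  | weakR {b : Bool} (Γ Δ : Multiset α) (A : α)
      (p : AsymDed R b Γ Δ) :
      AsymDed R b Γ (A ::ₘ Δ)

private lemma rtg_eqv {α : Type*} {R : α → α → Prop} {a b : α}
    (h : ReflTransGen R a b) : Relation.EqvGen R a b := by
  induction h with
  | refl => exact Relation.EqvGen.refl _
  | tail _ h₂ ih => exact Relation.EqvGen.trans _ _ _ ih (Relation.EqvGen.rel _ _ h₂)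

private lemma conv_ded {α : Type*} {R : α → α → Prop} {A B : α}
    (h : Relation.EqvGen R A B) :
    (∀ Γ Δ : Multiset α, AsymDed R true (A ::ₘ Γ) (B ::ₘ Δ)) ∧
    (∀ Γ Δ : Multiset α, AsymDed R true (B ::ₘ Γ) (A ::ₘ Δ)) := by
  induction h with
  | rel x y hxy =>
    constructor
    · intro Γ Δ
      exact AsymDed.ax Γ Δ x y y (ReflTransGen.single hxy) ReflTransGen.refl
    · intro Γ Δ
      exact AsymDed.cut (y ::ₘ Γ) (x ::ₘ Δ) x y x (ReflTransGen.single hxy) ReflTransGen.refl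
        (AsymDed.ax Γ (x ::ₘ Δ) y y y ReflTransGen.refl ReflTransGen.refl)
        (AsymDed.ax (y ::ₘ Γ) Δ x x x ReflTransGen.refl ReflTransGen.refl)
  | refl x =>
    exact ⟨fun Γ Δ => AsymDed.ax Γ Δ x x x ReflTransGen.refl ReflTransGen.refl,
           fun Γ Δ => AsymDed.ax Γ Δ x x x ReflTransGen.refl ReflTransGen.refl⟩
  | symm x y _ ih => exact ⟨ih.2, ih.1⟩
  | trans x y z _ _ ih1 ih2 =>
    constructor
    · intro Γ Δ
      exact AsymDed.cut (x ::ₘ Γ) (z ::ₘ Δ) y y y ReflTransGen.refl ReflTransGen.refl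
        (ih1.1 Γ (z ::ₘ Δ)) (ih2.1 (x ::ₘ Γ) Δ)
    · intro Γ Δ
      exact AsymDed.cut (z ::ₘ Γ) (x ::ₘ Δ) y y y ReflTransGen.refl ReflTransGen.refl
        (ih2.2 Γ (x ::ₘ Δ)) (ih1.2 (z ::ₘ Γ) Δ)

private lemma asymDed_forward {α : Type*} {R : α → α → Prop} {b : Bool}
    {Γ Δ : Multiset α} (hp : AsymDed R b Γ Δ) :
    ∃ A ∈ Γ, ∃ B ∈ Δ, Relation.EqvGen R A B := by
  induction hp with
    | ax Γ Δ A₁ A₂ C h₁ h₂ =>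
      exact ⟨A₁, Multiset.mem_cons_self _ _, A₂, Multiset.mem_cons_self _ _,
        (rtg_eqv h₁).trans _ _ _ ((rtg_eqv h₂).symm _ _)⟩
    | cut Γ Δ C C₁ C₂ h₁ h₂ p₁ p₂ ih₁ ih₂ =>
      obtain ⟨A, hA, B, hB, hAB⟩ := ih₁
      rcases Multiset.mem_cons.1 hB with hB | hB
      · obtain ⟨A', hA', B', hB', hAB'⟩ := ih₂
        rcases Multiset.mem_cons.1 hA' with hA' | hA'
        · subst hB; subst hA'
          refine ⟨A, hA, B', hB', ?_⟩
          exact hAB.trans _ _ _ (((rtg_eqv h₁).symm _ _).trans _ _ _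
            ((rtg_eqv h₂).trans _ _ _ hAB'))
        · exact ⟨A', hA', B', hB', hAB'⟩
      · exact ⟨A, hA, B, hB, hAB⟩
    | contrL Γ Δ A A₁ A₂ h₁ h₂ p ih =>
      obtain ⟨A', hA', B, hB, hAB⟩ := ih
      rcases Multiset.mem_cons.1 hA' with hA' | hA'
      · subst hA'
        exact ⟨A, Multiset.mem_cons_self _ _, B, hB, (rtg_eqv h₁).trans _ _ _ hAB⟩
      · rcases Multiset.mem_cons.1 hA' with hA' | hA'
        · subst hA'
          exact ⟨A, Multiset.mem_cons_self _ _, B, hB, (rtg_eqv h₂).trans _ _ _ hAB⟩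
        · exact ⟨A', Multiset.mem_cons_of_mem hA', B, hB, hAB⟩
    | contrR Γ Δ A A₁ A₂ h₁ h₂ p ih =>
      obtain ⟨A', hA', B, hB, hAB⟩ := ih
      rcases Multiset.mem_cons.1 hB with hB | hB
      · subst hB
        exact ⟨A', hA', A, Multiset.mem_cons_self _ _,
          hAB.trans _ _ _ ((rtg_eqv h₁).symm _ _)⟩
      · rcases Multiset.mem_cons.1 hB with hB | hB
        · subst hB
          exact ⟨A', hA', A, Multiset.mem_cons_self _ _,
            hAB.trans _ _ _ ((rtg_eqv h₂).symm _ _)⟩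
        · exact ⟨A', hA', B, Multiset.mem_cons_of_mem hB, hAB⟩
    | weakL Γ Δ A p ih =>
      obtain ⟨A', hA', B, hB, hAB⟩ := ih
      exact ⟨A', Multiset.mem_cons_of_mem hA', B, hB, hAB⟩
    | weakR Γ Δ A p ih =>
      obtain ⟨A', hA', B, hB, hAB⟩ := ih
      exact ⟨A', hA', B, Multiset.mem_cons_of_mem hB, hAB⟩

/--
In asymmetric atomic deduction modulo `R`, the sequent `Γ ⊢ Δ` is provable if
and only if `Γ` contains a proposition `A` and `Δ` contains a proposition `B`
such that `A ≡ B`, where `≡` is the reflexive-symmetric-transitive closure of `R`.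
-/
theorem asymDed_provable_iff {α : Type*} (R : α → α → Prop) (Γ Δ : Multiset α) :
    AsymDed R true Γ Δ ↔ ∃ A ∈ Γ, ∃ B ∈ Δ, Relation.EqvGen R A B := by
  constructor
  · exact asymDed_forward
  · rintro ⟨A, hA, B, hB, hAB⟩
    obtain ⟨Γ', rfl⟩ := Multiset.exists_cons_of_mem hA
    obtain ⟨Δ', rfl⟩ := Multiset.exists_cons_of_mem hB
    exact (conv_ded hAB).1 Γ' Δ'
end

section
/- In asymmetric atomic deduction modulo a rewrite relation R, a sequent Γ ⊢ Δ has a cut-free proof if and only if Γ contains an atomic proposition A and Δ contains an atomic proposition B such that A and B have a common reduct. -/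
open Relation

/-!
Reading the rules upwards, weakening only drops atoms and contraction only replaces an atom by
reducts of it, so if some atom on the left and some atom on the right of a premise have a common
reduct, then so do atoms of the conclusion. Every cut-free proof therefore inherits this property
from its axioms; conversely, a single axiom proves any sequent with such a pair.
-/

def HasJoinablePair {α : Type*} (R : α → α → Prop) (Γ Δ : Multiset α) : Prop :=
  ∃ A ∈ Γ, ∃ B ∈ Δ, Join (ReflTransGen R) A B

namespace HasJoinablePair

variable {α : Type*} {R : α → α → Prop} {Γ Γ' Δ Δ' : Multiset α}

theorem of_reducts_left (hΓ : ∀ X ∈ Γ', ∃ Y ∈ Γ, ReflTransGen R Y X)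
    (h : HasJoinablePair R Γ' Δ) : HasJoinablePair R Γ Δ := by
  obtain ⟨X, hX, B, hB, C, hXC, hBC⟩ := h
  obtain ⟨Y, hY, hYX⟩ := hΓ X hX
  exact ⟨Y, hY, B, hB, C, hYX.trans hXC, hBC⟩

theorem of_reducts_right (hΔ : ∀ X ∈ Δ', ∃ Y ∈ Δ, ReflTransGen R Y X)
    (h : HasJoinablePair R Γ Δ') : HasJoinablePair R Γ Δ := by
  obtain ⟨A, hA, X, hX, C, hAC, hXC⟩ := h
  obtain ⟨Y, hY, hYX⟩ := hΔ X hX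
  exact ⟨A, hA, Y, hY, C, hAC, hYX.trans hXC⟩

end HasJoinablePair

section Reducts

variable {α : Type*} {R : α → α → Prop}

theorem exists_reduct_mem_cons (Γ : Multiset α) (A : α) :
    ∀ X ∈ Γ, ∃ Y ∈ A ::ₘ Γ, ReflTransGen R Y X :=
  fun X hX => ⟨X, Multiset.mem_cons_of_mem hX, .refl⟩

theorem exists_reduct_mem_cons_of_contract (Γ : Multiset α) {A A₁ A₂ : α}
    (h₁ : ReflTransGen R A A₁) (h₂ : ReflTransGen R A A₂) :
    ∀ X ∈ A₁ ::ₘ A₂ ::ₘ Γ, ∃ Y ∈ A ::ₘ Γ, ReflTransGen R Y X := by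
  intro X hX
  rcases Multiset.mem_cons.1 hX with rfl | hX
  · exact ⟨A, Multiset.mem_cons_self _ _, h₁⟩
  rcases Multiset.mem_cons.1 hX with rfl | hX
  · exact ⟨A, Multiset.mem_cons_self _ _, h₂⟩
  · exact exists_reduct_mem_cons Γ A X hX

end Reducts

namespace AsymDed

variable {α : Type*} {R : α → α → Prop}

theorem hasJoinablePair_of_cutFree {b : Bool} {Γ Δ : Multiset α} (p : AsymDed R b Γ Δ)
    (hb : b = false) : HasJoinablePair R Γ Δ := by
  induction p with
  | ax Γ Δ A₁ A₂ C h₁ h₂ =>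
    exact ⟨A₁, Multiset.mem_cons_self _ _, A₂, Multiset.mem_cons_self _ _, C, h₁, h₂⟩
  | cut => cases hb
  | contrL Γ Δ A A₁ A₂ h₁ h₂ _ ih =>
    exact (ih hb).of_reducts_left (exists_reduct_mem_cons_of_contract Γ h₁ h₂)
  | contrR Γ Δ A A₁ A₂ h₁ h₂ _ ih =>
    exact (ih hb).of_reducts_right (exists_reduct_mem_cons_of_contract Δ h₁ h₂)
  | weakL Γ Δ A _ ih => exact (ih hb).of_reducts_left (exists_reduct_mem_cons Γ A)
  | weakR Γ Δ A _ ih => exact (ih hb).of_reducts_right (exists_reduct_mem_cons Δ A)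

theorem of_hasJoinablePair {b : Bool} {Γ Δ : Multiset α} (h : HasJoinablePair R Γ Δ) :
    AsymDed R b Γ Δ := by
  obtain ⟨A, hA, B, hB, C, hAC, hBC⟩ := h
  obtain ⟨Γ', rfl⟩ := Multiset.exists_cons_of_mem hA
  obtain ⟨Δ', rfl⟩ := Multiset.exists_cons_of_mem hB
  exact ax Γ' Δ' A B C hAC hBC

end AsymDed

/--
In asymmetric atomic deduction modulo `R`, the sequent `Γ ⊢ Δ` has a cut-free
proof if and only if `Γ` contains a proposition `A` and `Δ` contains a
proposition `B` such that `A` and `B` have a common reduct.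
-/
theorem asymDed_cutFree_iff {α : Type*} (R : α → α → Prop) (Γ Δ : Multiset α) :
    AsymDed R false Γ Δ ↔
      ∃ A ∈ Γ, ∃ B ∈ Δ, ∃ C, Relation.ReflTransGen R A C ∧ Relation.ReflTransGen R B C :=
  ⟨fun p => p.hasJoinablePair_of_cutFree rfl, AsymDed.of_hasJoinablePair⟩
end

section
/- If a rewrite relation R is confluent, then asymmetric atomic deduction modulo R has the cut elimination property: every provable sequent has a cut-free proof. -/
open Relation

/-- `R` is confluent: any two reducts of a common element have a common reduct. -/
def Confluent {α : Type*} (R : α → α → Prop) : Prop :=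
  ∀ A B C : α, Relation.ReflTransGen R A B → Relation.ReflTransGen R A C →
    ∃ D, Relation.ReflTransGen R B D ∧ Relation.ReflTransGen R C D


private lemma asymDed_witness {α : Type*} {R : α → α → Prop}
    (hconf : Confluent R) {b : Bool} {Γ Δ : Multiset α}
    (h : AsymDed R b Γ Δ) :
    ∃ A ∈ Γ, ∃ B ∈ Δ, ∃ C, ReflTransGen R A C ∧ ReflTransGen R B C := by
  induction h with
  | ax Γ Δ A₁ A₂ C h₁ h₂ =>
      exact ⟨A₁, Multiset.mem_cons_self _ _, A₂, Multiset.mem_cons_self _ _, C, h₁, h₂⟩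
  | cut Γ Δ C C₁ C₂ h₁ h₂ p₁ p₂ ih₁ ih₂ =>
      obtain ⟨A, hA, B, hB, D, hAD, hBD⟩ := ih₁
      obtain ⟨A', hA', B', hB', D', hA'D', hB'D'⟩ := ih₂
      rcases Multiset.mem_cons.mp hB with hB | hB
      · rcases Multiset.mem_cons.mp hA' with hA' | hA'
        · subst hB; subst hA'
          obtain ⟨E, hDE, hD'E⟩ := hconf C D D' (h₁.trans hBD) (h₂.trans hA'D')
          exact ⟨A, hA, B', hB', E, hAD.trans hDE, hB'D'.trans hD'E⟩
        · exact ⟨A', hA', B', hB', D', hA'D', hB'D'⟩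
      · exact ⟨A, hA, B, hB, D, hAD, hBD⟩
  | contrL Γ Δ A A₁ A₂ h₁ h₂ p ih =>
      obtain ⟨X, hX, B, hB, C, hXC, hBC⟩ := ih
      rcases Multiset.mem_cons.mp hX with hX | hX
      · exact ⟨A, Multiset.mem_cons_self _ _, B, hB, C, (hX ▸ h₁).trans hXC, hBC⟩
      · rcases Multiset.mem_cons.mp hX with hX | hX
        · exact ⟨A, Multiset.mem_cons_self _ _, B, hB, C, (hX ▸ h₂).trans hXC, hBC⟩
        · exact ⟨X, Multiset.mem_cons_of_mem hX, B, hB, C, hXC, hBC⟩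
  | contrR Γ Δ A A₁ A₂ h₁ h₂ p ih =>
      obtain ⟨X, hX, B, hB, C, hXC, hBC⟩ := ih
      rcases Multiset.mem_cons.mp hB with hB | hB
      · exact ⟨X, hX, A, Multiset.mem_cons_self _ _, C, hXC, (hB ▸ h₁).trans hBC⟩
      · rcases Multiset.mem_cons.mp hB with hB | hB
        · exact ⟨X, hX, A, Multiset.mem_cons_self _ _, C, hXC, (hB ▸ h₂).trans hBC⟩
        · exact ⟨X, hX, B, Multiset.mem_cons_of_mem hB, C, hXC, hBC⟩
  | weakL Γ Δ A p ih =>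
      obtain ⟨X, hX, B, hB, C, hXC, hBC⟩ := ih
      exact ⟨X, Multiset.mem_cons_of_mem hX, B, hB, C, hXC, hBC⟩
  | weakR Γ Δ A p ih =>
      obtain ⟨X, hX, B, hB, C, hXC, hBC⟩ := ih
      exact ⟨X, hX, B, Multiset.mem_cons_of_mem hB, C, hXC, hBC⟩

/--
If the rewrite relation `R` is confluent, then asymmetric atomic deduction
modulo `R` has the cut elimination property: every provable sequent has a
cut-free proof.
-/
theorem asymDed_cut_elimination_of_confluent {α : Type*} (R : α → α → Prop)
    (hconf : Confluent R) (Γ Δ : Multiset α)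
    (h : AsymDed R true Γ Δ) : AsymDed R false Γ Δ := by
  obtain ⟨A, hA, B, hB, C, hAC, hBC⟩ := asymDed_witness hconf h
  obtain ⟨Γ', rfl⟩ := Multiset.exists_cons_of_mem hA
  obtain ⟨Δ', rfl⟩ := Multiset.exists_cons_of_mem hB
  exact AsymDed.ax _ _ A B C hAC hBC
end

section
/- If asymmetric atomic deduction modulo a rewrite relation R has the cut elimination property (every provable sequent has a cut-free proof), then R is confluent. -/
/-!
Cutting on `A` derives `B ⊢ C` from the axioms `B ⊢ B` and `C ⊢ C` whenever `A →* B` and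
`A →* C`. In a cut-free proof, on the other hand, every rule read from conclusion to premise
preserves the invariant "`B` rewrites to every formula on the left and `C` to every formula on
the right", so the axiom reached at a leaf joins `B` and `C`.
-/

open Relation

namespace AsymDed

variable {α : Type*} {R : α → α → Prop}

theorem singleton_of_reflTransGen {A B C : α} (hB : ReflTransGen R A B)
    (hC : ReflTransGen R A C) : AsymDed R true {B} {C} :=
  cut _ _ A B C hB hC (ax 0 {C} B B B .refl .refl) (ax {B} 0 C C C .refl .refl)

theorem join_of_cutFree {Γ Δ : Multiset α} (p : AsymDed R false Γ Δ) {B C : α}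
    (hΓ : ∀ x ∈ Γ, ReflTransGen R B x) (hΔ : ∀ x ∈ Δ, ReflTransGen R C x) :
    Join (ReflTransGen R) B C := by
  generalize hb : false = b at p
  induction p with
  | ax _ _ _ _ D h₁ h₂ =>
    rw [Multiset.forall_mem_cons] at hΓ hΔ
    exact ⟨D, hΓ.1.trans h₁, hΔ.1.trans h₂⟩
  | cut => cases hb
  | contrL _ _ _ _ _ h₁ h₂ _ ih =>
    obtain ⟨hBA, hΓ⟩ := Multiset.forall_mem_cons.mp hΓ
    exact ih (Multiset.forall_mem_cons.mpr ⟨hBA.trans h₁,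
      Multiset.forall_mem_cons.mpr ⟨hBA.trans h₂, hΓ⟩⟩) hΔ hb
  | contrR _ _ _ _ _ h₁ h₂ _ ih =>
    obtain ⟨hCA, hΔ⟩ := Multiset.forall_mem_cons.mp hΔ
    exact ih hΓ (Multiset.forall_mem_cons.mpr ⟨hCA.trans h₁,
      Multiset.forall_mem_cons.mpr ⟨hCA.trans h₂, hΔ⟩⟩) hb
  | weakL _ _ _ _ ih => exact ih (Multiset.forall_mem_cons.mp hΓ).2 hΔ hb
  | weakR _ _ _ _ ih => exact ih hΓ (Multiset.forall_mem_cons.mp hΔ).2 hb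

end AsymDed

/--
If asymmetric atomic deduction modulo `R` has the cut elimination property
(every provable sequent has a cut-free proof), then `R` is confluent.
-/
theorem confluent_of_asymDed_cut_elimination {α : Type*} (R : α → α → Prop)
    (hce : ∀ Γ Δ : Multiset α, AsymDed R true Γ Δ → AsymDed R false Γ Δ) :
    Confluent R := by
  intro A B C hAB hAC
  have cutFree := hce _ _ (AsymDed.singleton_of_reflTransGen hAB hAC)
  exact cutFree.join_of_cutFree (by simp [ReflTransGen.refl]) (by simp [ReflTransGen.refl])
end

section
/- The cut rule is redundant in asymmetric atomic deduction modulo a rewrite relation R (i.e., every provable sequent has a cut-free proof) if and only if R is confluent. -/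
open Relation

/-- There are formulas `A ∈ Γ`, `B ∈ Δ` with a common reduct. -/
def MeetSeq {α : Type*} (R : α → α → Prop) (Γ Δ : Multiset α) : Prop :=
  ∃ A ∈ Γ, ∃ B ∈ Δ, ∃ C, ReflTransGen R A C ∧ ReflTransGen R B C

lemma meetSeq_to_proof {α : Type*} {R : α → α → Prop} {Γ Δ : Multiset α}
    (h : MeetSeq R Γ Δ) : AsymDed R false Γ Δ := by
  classical
  obtain ⟨A, hA, B, hB, C, h1, h2⟩ := h
  rw [← Multiset.cons_erase hA, ← Multiset.cons_erase hB]
  exact AsymDed.ax _ _ _ _ C h1 h2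

lemma proof_to_meetSeq {α : Type*} {R : α → α → Prop} {b : Bool} {Γ Δ : Multiset α}
    (h : AsymDed R b Γ Δ) (hc : b = true → Confluent R) : MeetSeq R Γ Δ := by
  induction h with
  | ax Γ Δ A₁ A₂ C h1 h2 =>
    exact ⟨A₁, Multiset.mem_cons_self _ _, A₂, Multiset.mem_cons_self _ _, C, h1, h2⟩
  | cut Γ Δ C C₁ C₂ h1 h2 p1 p2 ih1 ih2 =>
    obtain ⟨A, hA, B, hB, D, hAD, hBD⟩ := ih1 hc
    rcases Multiset.mem_cons.mp hB with rfl | hB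
    · obtain ⟨A', hA', B', hB', D', hA'D', hB'D'⟩ := ih2 hc
      rcases Multiset.mem_cons.mp hA' with rfl | hA'
      · obtain ⟨E, hDE, hD'E⟩ := hc rfl C D D' (h1.trans hBD) (h2.trans hA'D')
        exact ⟨A, hA, B', hB', E, hAD.trans hDE, hB'D'.trans hD'E⟩
      · exact ⟨A', hA', B', hB', D', hA'D', hB'D'⟩
    · exact ⟨A, hA, B, hB, D, hAD, hBD⟩
  | contrL Γ Δ A A₁ A₂ h1 h2 p ih =>
    obtain ⟨X, hX, B, hB, D, hXD, hBD⟩ := ih hc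
    rcases Multiset.mem_cons.mp hX with rfl | hX
    · exact ⟨A, Multiset.mem_cons_self _ _, B, hB, D, h1.trans hXD, hBD⟩
    · rcases Multiset.mem_cons.mp hX with rfl | hX
      · exact ⟨A, Multiset.mem_cons_self _ _, B, hB, D, h2.trans hXD, hBD⟩
      · exact ⟨X, Multiset.mem_cons_of_mem hX, B, hB, D, hXD, hBD⟩
  | contrR Γ Δ A A₁ A₂ h1 h2 p ih =>
    obtain ⟨X, hX, B, hB, D, hXD, hBD⟩ := ih hc
    rcases Multiset.mem_cons.mp hB with rfl | hB
    · exact ⟨X, hX, A, Multiset.mem_cons_self _ _, D, hXD, h1.trans hBD⟩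
    · rcases Multiset.mem_cons.mp hB with rfl | hB
      · exact ⟨X, hX, A, Multiset.mem_cons_self _ _, D, hXD, h2.trans hBD⟩
      · exact ⟨X, hX, B, Multiset.mem_cons_of_mem hB, D, hXD, hBD⟩
  | weakL Γ Δ A p ih =>
    obtain ⟨X, hX, B, hB, D, hXD, hBD⟩ := ih hc
    exact ⟨X, Multiset.mem_cons_of_mem hX, B, hB, D, hXD, hBD⟩
  | weakR Γ Δ A p ih =>
    obtain ⟨X, hX, B, hB, D, hXD, hBD⟩ := ih hc
    exact ⟨X, hX, B, Multiset.mem_cons_of_mem hB, D, hXD, hBD⟩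

/--
Main proposition: the Cut rule is redundant in asymmetric atomic deduction
modulo `R` (every provable sequent has a cut-free proof) if and only if `R`
is confluent.
-/
theorem asymDed_cut_redundant_iff_confluent {α : Type*} (R : α → α → Prop) :
    (∀ Γ Δ : Multiset α, AsymDed R true Γ Δ → AsymDed R false Γ Δ) ↔ Confluent R := by
  constructor
  · intro he A B C hAB hAC
    have hfull : AsymDed R true ({B} : Multiset α) ({C} : Multiset α) := by
      refine AsymDed.cut _ _ A B C hAB hAC ?_ ?_
      · exact AsymDed.ax 0 ({C} : Multiset α) B B B ReflTransGen.refl ReflTransGen.refl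
      · exact AsymDed.ax ({B} : Multiset α) 0 C C C ReflTransGen.refl ReflTransGen.refl
    have := proof_to_meetSeq (he _ _ hfull) (by simp)
    obtain ⟨X, hX, Y, hY, D, hXD, hYD⟩ := this
    rw [Multiset.mem_singleton] at hX hY
    subst hX; subst hY
    exact ⟨D, hXD, hYD⟩
  · intro hc Γ Δ h
    exact meetSeq_to_proof (proof_to_meetSeq h fun _ => hc)
end
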